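/- Let Σ × Ω be a finite sample space, π a probability mass function on Σ. For each σ ∈ Σ and ω ∈ Ω let |u_σ^ω⟩ be vectors in a Hilbert space with Σ_ω ‖|u_σ^ω⟩‖² = 1, set p_σ(ω) = ‖|u_σ^ω⟩‖² and p(σ,ω) = p_σ(ω)π(σ); for each (σ,ω) with p(σ,ω) > 0 let |v_σ^ω⟩ be nonzero vectors. Let û, v̂ be the normalized versions, and define a random variable D(σ,ω) = (1/2)‖|û_σ^ω⟩⟨û_σ^ω| − |v̂_σ^ω⟩⟨v̂_σ^ω|‖₁ when p(σ,ω) > 0 and D(σ,ω) = 0 otherwise. If Σ_σ π(σ) Σ_ω ‖|u_σ^ω⟩ − |v_σ^ω⟩‖² ≤ δ² for some δ > 0, then for any c > 0, Pr(D ≤ δ^c) ≥ 1 − 4δ^{2(1−c)}, where the probability is with respect to p. -/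

import Mathlib

open scoped ComplexOrder
open Classical

/-- The trace norm (Schatten 1-norm) of a square complex matrix:
`‖A‖₁ = tr √(AᴴA)`. -/
noncomputable def traceNorm {d : ℕ} (A : Matrix (Fin d) (Fin d) ℂ) : ℝ :=
  (((Matrix.posSemidef_conjTranspose_mul_self A).1.eigenvectorUnitary : Matrix (Fin d) (Fin d) ℂ) *
    Matrix.diagonal ((fun r : ℝ => (r : ℂ)) ∘ Real.sqrt ∘ (Matrix.posSemidef_conjTranspose_mul_self A).1.eigenvalues) *
    (star ((Matrix.posSemidef_conjTranspose_mul_self A).1.eigenvectorUnitary :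
      Matrix (Fin d) (Fin d) ℂ))).trace.re

/-- The rank-one operator `|u⟩⟨u|` associated to a vector `u`. -/
noncomputable def outer {d : ℕ} (u : EuclideanSpace ℂ (Fin d)) :
    Matrix (Fin d) (Fin d) ℂ :=
  Matrix.of fun i j => u i * (starRingEnd ℂ) (u j)

/-- The probability mass `p(σ,ω) = ‖u_σ^ω‖²·π(σ)`. -/
noncomputable def probMass {S Ω : Type*} {d : ℕ} (π : S → ℝ)
    (u : S → Ω → EuclideanSpace ℂ (Fin d)) (x : S × Ω) : ℝ :=
  ‖u x.1 x.2‖ ^ 2 * π x.1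

/-- The random variable `D(σ,ω)`: the trace distance between the normalized versions of
`u_σ^ω` and `v_σ^ω` when `p(σ,ω) > 0`, and `0` otherwise. -/
noncomputable def traceDistRV {S Ω : Type*} {d : ℕ} (π : S → ℝ)
    (u v : S → Ω → EuclideanSpace ℂ (Fin d)) (x : S × Ω) : ℝ :=
  if 0 < probMass π u x then
    (1 / 2) * traceNorm (outer (‖u x.1 x.2‖⁻¹ • u x.1 x.2) -
      outer (‖v x.1 x.2‖⁻¹ • v x.1 x.2))
  else 0

/-! For unit vectors `a`, `b` with `g = ⟪a, b⟫`, the matrix `B = (|a⟩⟨a| - |b⟩⟨b|)²` satisfies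
`B² = (1 - |g|²) B`, so `√B = B / √(1 - |g|²)` and the trace distance is
`√(1 - |g|²) ≤ ‖a - b‖`. Combined with `‖u‖ ‖û - v̂‖ ≤ 2 ‖u - v‖` this gives
`p · D² ≤ 4 π ‖u - v‖²` pointwise, hence `E_p[D²] ≤ 4 δ²`, and Chebyshev's inequality at the
threshold `δ^c` gives the bound. -/

open NormedSpace in
theorem norm_mul_norm_normalize_sub_normalize_le {E : Type*} [NormedAddCommGroup E]
    [NormedSpace ℝ E] (u v : E) :
    ‖u‖ * ‖normalize u - normalize v‖ ≤ 2 * ‖u - v‖ :=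
  calc ‖u‖ * ‖normalize u - normalize v‖
      = ‖(u - v) + (‖v‖ - ‖u‖) • normalize v‖ := by
        rw [← Real.norm_of_nonneg (norm_nonneg u), ← norm_smul, smul_sub, sub_smul,
          norm_smul_normalize, norm_smul_normalize, Real.norm_of_nonneg (norm_nonneg u)]
        abel_nf
    _ ≤ ‖u - v‖ + |‖v‖ - ‖u‖| * ‖normalize v‖ := by
        grw [norm_add_le, norm_smul, Real.norm_eq_abs]
    _ ≤ ‖u - v‖ + ‖u - v‖ * 1 := by
        gcongr
        · exact norm_sub_rev u v ▸ abs_norm_sub_norm_le v u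
        · rcases eq_or_ne v 0 with rfl | hv
          · simp
          · exact (norm_normalize hv).le
    _ = 2 * ‖u - v‖ := by ring

theorem one_sub_norm_inner_sq_le_norm_sub_sq {𝕜 E : Type*} [RCLike 𝕜] [NormedAddCommGroup E]
    [InnerProductSpace 𝕜 E] {a b : E} (ha : ‖a‖ = 1) (hb : ‖b‖ = 1) :
    1 - ‖(inner 𝕜 a b : 𝕜)‖ ^ 2 ≤ ‖a - b‖ ^ 2 := by
  have hle : ‖(inner 𝕜 a b : 𝕜)‖ ≤ 1 := by
    simpa [ha, hb] using norm_inner_le_norm (𝕜 := 𝕜) a b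
  have hre : RCLike.re (inner 𝕜 a b : 𝕜) ≤ ‖(inner 𝕜 a b : 𝕜)‖ := RCLike.re_le_norm _
  rw [@norm_sub_sq 𝕜, ha, hb]
  nlinarith [norm_nonneg (inner 𝕜 a b : 𝕜)]

theorem one_sub_sum_mul_sq_div_sq_le_sum_ite_le {ι : Type*} [Fintype ι] (p X : ι → ℝ)
    (hp : ∀ i, 0 ≤ p i) (hp1 : ∑ i, p i = 1) {t : ℝ} (ht : 0 < t) :
    1 - (∑ i, p i * X i ^ 2) / t ^ 2 ≤ ∑ i, if X i ≤ t then p i else 0 := by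
  have hmarkov : ∀ i, (if X i ≤ t then 0 else p i) ≤ p i * X i ^ 2 / t ^ 2 := by
    intro i
    split_ifs with h
    · have := hp i; positivity
    · rw [le_div_iff₀ (by positivity)]
      gcongr
      · exact hp i
      · linarith
  have hsplit : ∑ i, (if X i ≤ t then p i else 0) = 1 - ∑ i, (if X i ≤ t then 0 else p i) := by
    rw [← hp1, ← Finset.sum_sub_distrib]
    exact Finset.sum_congr rfl fun i _ => by split_ifs <;> ring
  rw [hsplit, Finset.sum_div]
  linarith [Finset.sum_le_sum fun i (_ : i ∈ Finset.univ) => hmarkov i]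

open Matrix

theorem Matrix.PosSemidef.eq_cfc_sqrt_of_sq_eq {n 𝕜 : Type*} [Fintype n] [DecidableEq n]
    [RCLike 𝕜] {C B : Matrix n n 𝕜} (hC : C.PosSemidef) (h : C ^ 2 = B) :
    C = cfc Real.sqrt B := by
  have hsa : IsSelfAdjoint C := hC.1
  rw [← h, ← cfc_pow_id (R := ℝ) C 2 hsa, ← cfc_comp Real.sqrt (fun x : ℝ => x ^ 2) C]
  conv_lhs => rw [← cfc_id' ℝ C]
  refine cfc_congr ?_
  rw [hC.1.spectrum_real_eq_range_eigenvalues]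
  rintro _ ⟨i, rfl⟩
  exact (Real.sqrt_sq (hC.eigenvalues_nonneg i)).symm

theorem traceNorm_eq_re_trace_of_sq_eq {d : ℕ} {A C : Matrix (Fin d) (Fin d) ℂ}
    (hC : C.PosSemidef) (h : C ^ 2 = Aᴴ * A) : traceNorm A = C.trace.re := by
  have hAA := (posSemidef_conjTranspose_mul_self A).1
  have : traceNorm A = (cfc Real.sqrt (Aᴴ * A)).trace.re := by
    rw [hAA.cfc_eq, IsHermitian.cfc, Unitary.conjStarAlgAut_apply]; rfl
  rw [this, ← hC.eq_cfc_sqrt_of_sq_eq h]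

-- For `t = 0` the hypothesis forces `Aᴴ * A = 0`, matching the junk value `x / √0 = 0`.
theorem traceNorm_eq_of_mul_self_eq_smul {d : ℕ} {A : Matrix (Fin d) (Fin d) ℂ} {t : ℝ}
    (ht : 0 ≤ t) (h : (Aᴴ * A) * (Aᴴ * A) = (t : ℂ) • (Aᴴ * A)) :
    traceNorm A = (Aᴴ * A).trace.re / √t := by
  set B := Aᴴ * A
  have hB : B.PosSemidef := posSemidef_conjTranspose_mul_self A
  have hC : (((√t)⁻¹ : ℝ) : ℂ) • B |>.PosSemidef := hB.smul (by positivity)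
  have hC2 : ((((√t)⁻¹ : ℝ) : ℂ) • B) ^ 2 = B := by
    rcases ht.eq_or_lt with rfl | htpos
    · have hBB : Bᴴ * B = 0 := by rw [hB.1.eq, h]; simp
      simp [conjTranspose_mul_self_eq_zero.mp hBB]
    · have hunit : (√t)⁻¹ * (√t)⁻¹ * t = 1 := by
        rw [← mul_inv, Real.mul_self_sqrt ht, inv_mul_cancel₀ htpos.ne']
      rw [sq, smul_mul_smul, h, smul_smul, ← Complex.ofReal_mul, ← Complex.ofReal_mul, hunit,
        Complex.ofReal_one, one_smul]
  rw [traceNorm_eq_re_trace_of_sq_eq hC hC2, trace_smul, smul_eq_mul, Complex.re_ofReal_mul]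
  ring

open WithLp (ofLp)
open ComplexConjugate

section RankOne

variable {ι 𝕜 : Type*} [Fintype ι] [RCLike 𝕜]

theorem vecMulVec_star_mul_vecMulVec_star (a b c e : EuclideanSpace 𝕜 ι) :
    vecMulVec (ofLp a) (star (ofLp b)) * vecMulVec (ofLp c) (star (ofLp e)) =
      (inner 𝕜 b c : 𝕜) • vecMulVec (ofLp a) (star (ofLp e)) := by
  rw [vecMulVec_mul_vecMulVec, vecMulVec_smul, dotProduct_comm]
  rfl

theorem trace_vecMulVec_star (a b : EuclideanSpace 𝕜 ι) :
    (vecMulVec (ofLp a) (star (ofLp b))).trace = (inner 𝕜 b a : 𝕜) := by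
  rw [trace_vecMulVec]
  rfl

end RankOne

theorem outer_eq_vecMulVec {d : ℕ} (u : EuclideanSpace ℂ (Fin d)) :
    outer u = vecMulVec (ofLp u) (star (ofLp u)) := rfl

theorem traceNorm_outer_sub_outer {d : ℕ} {a b : EuclideanSpace ℂ (Fin d)} (ha : ‖a‖ = 1)
    (hb : ‖b‖ = 1) :
    traceNorm (outer a - outer b) = 2 * √(1 - ‖(inner ℂ a b : ℂ)‖ ^ 2) := by
  set g : ℂ := inner ℂ a b
  set P : EuclideanSpace ℂ (Fin d) → EuclideanSpace ℂ (Fin d) → Matrix (Fin d) (Fin d) ℂ :=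
    fun x y => vecMulVec (ofLp x) (star (ofLp y))
  have hmul : ∀ x y z w, P x y * P z w = (inner ℂ y z : ℂ) • P x w :=
    vecMulVec_star_mul_vecMulVec_star
  have haa : (inner ℂ a a : ℂ) = 1 := by rw [inner_self_eq_norm_sq_to_K, ha]; norm_num
  have hbb : (inner ℂ b b : ℂ) = 1 := by rw [inner_self_eq_norm_sq_to_K, hb]; norm_num
  have hab : (inner ℂ a b : ℂ) = g := rfl
  have hba : (inner ℂ b a : ℂ) = conj g := (inner_conj_symm b a).symm
  have hgg : conj g * g = (‖g‖ : ℂ) ^ 2 := Complex.conj_mul' g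
  have hP : ∀ x, outer x = P x x := fun _ => rfl
  have hherm : (outer a - outer b)ᴴ = outer a - outer b := by
    simp [outer_eq_vecMulVec, conjTranspose_sub]
  have hsq : (outer a - outer b)ᴴ * (outer a - outer b) =
      P a a + P b b - g • P a b - conj g • P b a := by
    rw [hherm, hP, hP, sub_mul, mul_sub, mul_sub]
    simp only [hmul, haa, hbb, hba, one_smul]
    abel
  have hsq_sq : ((outer a - outer b)ᴴ * (outer a - outer b)) *
      ((outer a - outer b)ᴴ * (outer a - outer b)) =
      ((1 - ‖g‖ ^ 2 : ℝ) : ℂ) • ((outer a - outer b)ᴴ * (outer a - outer b)) := by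
    rw [hsq]
    simp only [add_mul, mul_add, sub_mul, mul_sub, Matrix.smul_mul, Matrix.mul_smul, hmul, haa,
      hbb, hab, hba, smul_smul]
    push_cast
    match_scalars
    · linear_combination -hgg
    · linear_combination conj g * hgg
    · linear_combination g * hgg
    · linear_combination -hgg
  have htrace : ((outer a - outer b)ᴴ * (outer a - outer b)).trace.re = 2 * (1 - ‖g‖ ^ 2) := by
    rw [hsq]
    simp only [trace_sub, trace_add, trace_smul, P, trace_vecMulVec_star, haa, hbb, hab, hba,
      smul_eq_mul, Complex.conj_mul', Complex.mul_conj', ← Complex.ofReal_pow, Complex.sub_re,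
      Complex.add_re, Complex.one_re, Complex.ofReal_re]
    ring
  have hg : ‖g‖ ≤ 1 := by simpa [ha, hb] using norm_inner_le_norm (𝕜 := ℂ) a b
  rw [traceNorm_eq_of_mul_self_eq_smul (by nlinarith [norm_nonneg g]) hsq_sq, htrace,
    mul_div_assoc, Real.div_sqrt]

section RobustProb

open NormedSpace

variable {S Ω : Type*} {d : ℕ} {π : S → ℝ}
  {u v : S → Ω → EuclideanSpace ℂ (Fin d)}

theorem probMass_nonneg (hπ0 : ∀ σ, 0 ≤ π σ) (x : S × Ω) : 0 ≤ probMass π u x :=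
  mul_nonneg (sq_nonneg _) (hπ0 x.1)

theorem sum_probMass_eq_one [Fintype S] [Fintype Ω] (hπ1 : ∑ σ, π σ = 1)
    (hu : ∀ σ, ∑ ω, ‖u σ ω‖ ^ 2 = 1) :
    ∑ x, probMass π u x = 1 := by
  simp only [probMass, Fintype.sum_prod_type, ← Finset.sum_mul, hu, one_mul, hπ1]

theorem traceDistRV_mem_Icc {x : S × Ω} (hx : 0 < probMass π u x) (hvx : v x.1 x.2 ≠ 0) :
    traceDistRV π u v x ∈ Set.Icc 0 ‖normalize (u x.1 x.2) - normalize (v x.1 x.2)‖ := by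
  have hux : u x.1 x.2 ≠ 0 := by
    rintro h
    simp [probMass, h] at hx
  have hD : traceDistRV π u v x =
      √(1 - ‖(inner ℂ (normalize (u x.1 x.2)) (normalize (v x.1 x.2)) : ℂ)‖ ^ 2) := by
    change (if 0 < probMass π u x then 1 / 2 * traceNorm (outer (normalize (u x.1 x.2)) -
      outer (normalize (v x.1 x.2))) else 0) = _
    rw [if_pos hx, traceNorm_outer_sub_outer (norm_normalize hux) (norm_normalize hvx)]
    ring
  rw [hD]
  refine ⟨Real.sqrt_nonneg _, ?_⟩
  calc _ ≤ √(‖normalize (u x.1 x.2) - normalize (v x.1 x.2)‖ ^ 2) :=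
        Real.sqrt_le_sqrt <| one_sub_norm_inner_sq_le_norm_sub_sq (norm_normalize hux)
          (norm_normalize hvx)
    _ = _ := Real.sqrt_sq (norm_nonneg _)

theorem probMass_mul_traceDistRV_sq_le (hπ0 : ∀ σ, 0 ≤ π σ)
    (hv : ∀ x : S × Ω, 0 < probMass π u x → v x.1 x.2 ≠ 0) (x : S × Ω) :
    probMass π u x * traceDistRV π u v x ^ 2 ≤ 4 * (π x.1 * ‖u x.1 x.2 - v x.1 x.2‖ ^ 2) := by
  have hπx := hπ0 x.1
  rcases (probMass_nonneg hπ0 x).eq_or_lt with hx | hx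
  · rw [← hx, zero_mul]
    positivity
  obtain ⟨hD0, hD⟩ := traceDistRV_mem_Icc hx (hv x hx)
  have hbound : ‖u x.1 x.2‖ * traceDistRV π u v x ≤ 2 * ‖u x.1 x.2 - v x.1 x.2‖ :=
    (mul_le_mul_of_nonneg_left hD (norm_nonneg _)).trans
      (norm_mul_norm_normalize_sub_normalize_le _ _)
  calc probMass π u x * traceDistRV π u v x ^ 2
      = π x.1 * (‖u x.1 x.2‖ * traceDistRV π u v x) ^ 2 := by rw [probMass]; ring
    _ ≤ π x.1 * (2 * ‖u x.1 x.2 - v x.1 x.2‖) ^ 2 :=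
        mul_le_mul_of_nonneg_left (pow_le_pow_left₀ (by positivity) hbound 2) hπx
    _ = 4 * (π x.1 * ‖u x.1 x.2 - v x.1 x.2‖ ^ 2) := by ring

theorem sum_probMass_mul_traceDistRV_sq_le [Fintype S] [Fintype Ω] (hπ0 : ∀ σ, 0 ≤ π σ)
    (hv : ∀ x : S × Ω, 0 < probMass π u x → v x.1 x.2 ≠ 0) :
    ∑ x, probMass π u x * traceDistRV π u v x ^ 2 ≤
      4 * ∑ σ, π σ * ∑ ω, ‖u σ ω - v σ ω‖ ^ 2 :=
  calc _ ≤ ∑ x : S × Ω, 4 * (π x.1 * ‖u x.1 x.2 - v x.1 x.2‖ ^ 2) :=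
        Finset.sum_le_sum fun x _ => probMass_mul_traceDistRV_sq_le hπ0 hv x
    _ = _ := by simp only [← Finset.mul_sum, Fintype.sum_prod_type]

end RobustProb

theorem general_robust_prob_general {S Ω : Type*} [Fintype S] [Fintype Ω] {d : ℕ}
    (π : S → ℝ) (hπ0 : ∀ σ, 0 ≤ π σ) (hπ1 : ∑ σ, π σ = 1)
    (u : S → Ω → EuclideanSpace ℂ (Fin d))
    (hu : ∀ σ, ∑ ω, ‖u σ ω‖ ^ 2 = 1)
    (v : S → Ω → EuclideanSpace ℂ (Fin d))
    (hv : ∀ x : S × Ω, 0 < probMass π u x → v x.1 x.2 ≠ 0)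
    (δ : ℝ) (hδ : 0 < δ)
    (hsum : ∑ σ, π σ * ∑ ω, ‖u σ ω - v σ ω‖ ^ 2 ≤ δ ^ 2)
    (c : ℝ) :
    1 - 4 * δ ^ (2 * (1 - c)) ≤
      ∑ x : S × Ω, if traceDistRV π u v x ≤ δ ^ c then probMass π u x else 0 := by
  have hmoment : ∑ x, probMass π u x * traceDistRV π u v x ^ 2 ≤ 4 * δ ^ 2 :=
    (sum_probMass_mul_traceDistRV_sq_le hπ0 hv).trans (by linarith)
  have hexp : 4 * δ ^ 2 / (δ ^ c) ^ 2 = 4 * δ ^ (2 * (1 - c)) := by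
    rw [← Real.rpow_natCast, ← Real.rpow_natCast, ← Real.rpow_mul hδ.le, mul_div_assoc,
      ← Real.rpow_sub hδ]
    ring_nf
  calc 1 - 4 * δ ^ (2 * (1 - c))
      ≤ 1 - (∑ x, probMass π u x * traceDistRV π u v x ^ 2) / (δ ^ c) ^ 2 := by
        rw [← hexp]; gcongr
    _ ≤ _ := one_sub_sum_mul_sq_div_sq_le_sum_ite_le _ _ (probMass_nonneg hπ0)
        (sum_probMass_eq_one hπ1 hu) (Real.rpow_pos_of_pos hδ c)

/-- if `Σ_σ π(σ) Σ_ω ‖u_σ^ω − v_σ^ω‖² ≤ δ²` with `δ > 0`, then for any `c > 0`,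
`Pr(D ≤ δ^c) ≥ 1 − 4δ^{2(1−c)}` with respect to the distribution `p`. -/
theorem general_robust_prob {S Ω : Type*} [Fintype S] [Fintype Ω] {d : ℕ}
    (π : S → ℝ) (hπ0 : ∀ σ, 0 ≤ π σ) (hπ1 : ∑ σ, π σ = 1)
    (u : S → Ω → EuclideanSpace ℂ (Fin d))
    (hu : ∀ σ, ∑ ω, ‖u σ ω‖ ^ 2 = 1)
    (v : S → Ω → EuclideanSpace ℂ (Fin d))
    (hv : ∀ x : S × Ω, 0 < probMass π u x → v x.1 x.2 ≠ 0)
    (δ : ℝ) (hδ : 0 < δ)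
    (hsum : ∑ σ, π σ * ∑ ω, ‖u σ ω - v σ ω‖ ^ 2 ≤ δ ^ 2)
    (c : ℝ) (hc : 0 < c) :
    1 - 4 * δ ^ (2 * (1 - c)) ≤
      ∑ x : S × Ω, if traceDistRV π u v x ≤ δ ^ c then probMass π u x else 0 :=
  general_robust_prob_general π hπ0 hπ1 u hu v hv δ hδ hsum c
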